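/- arXiv:2305.05392 — 5 statements merged into one kernel-verified Lean document; each statement's English description precedes it below -/
import Mathlib

section
/- Let p ∈ (1/2, 1), η > 0, d > 0 and 0 < ε < η. Define the adversarial accuracy v(w) = p·Φ((w + (η−ε)d)/√d) + (1−p)·Φ((−w + (η−ε)d)/√d), where Φ is the standard normal CDF. Then v attains its unique global maximum at w₁^{AT} = (ln p − ln(1−p)) / (2(η − ε)). -/
open Real MeasureTheory Set

noncomputable def stdNormalCDF (x : ℝ) : ℝ :=
  ∫ t in Set.Iic x, (Real.sqrt (2 * Real.pi))⁻¹ * Real.exp (-t ^ 2 / 2)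

lemma gauss_integrable : Integrable (fun t : ℝ => (Real.sqrt (2*Real.pi))⁻¹ * Real.exp (-t^2/2)) := by
  have h : Integrable (fun t : ℝ => Real.exp (-(1/2 : ℝ)*t^2)) := integrable_exp_neg_mul_sq (by norm_num)
  have h2 := h.const_mul ((Real.sqrt (2*Real.pi))⁻¹)
  convert h2 using 2 with t
  ring_nf

lemma hasDerivAt_stdNormalCDF (x : ℝ) :
    HasDerivAt stdNormalCDF ((Real.sqrt (2*Real.pi))⁻¹ * Real.exp (-x^2/2)) x := by
  set g : ℝ → ℝ := fun t => (Real.sqrt (2*Real.pi))⁻¹ * Real.exp (-t^2/2) with hg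
  have hgc : Continuous g := by continuity
  have hint := gauss_integrable
  have heq : stdNormalCDF = fun y => stdNormalCDF 0 + ∫ t in (0:ℝ)..y, g t := by
    funext y
    have h := intervalIntegral.integral_Iic_sub_Iic (hint.integrableOn) (hint.integrableOn) (a := 0) (b := y)
    simp only [stdNormalCDF]
    linarith [h]
  rw [heq]
  have hftc : HasDerivAt (fun y => ∫ t in (0:ℝ)..y, g t) (g x) x :=
    intervalIntegral.integral_hasDerivAt_right hint.intervalIntegrable
      (hgc.stronglyMeasurableAtFilter _ _) hgc.continuousAt
  exact hftc.const_add _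

lemma key_gen (a b k d : ℝ) (ha : 0 < a) (hb : 0 < b) (hd : 0 < d)
    (w : ℝ) (hL : 2*k*w < Real.log a - Real.log b) :
    b * Real.exp (-((-w + k*d)/Real.sqrt d)^2/2) < a * Real.exp (-((w + k*d)/Real.sqrt d)^2/2) := by
  have hs : (Real.sqrt d)^2 = d := Real.sq_sqrt hd.le
  nth_rewrite 1 [← Real.exp_log hb]
  nth_rewrite 1 [← Real.exp_log ha]
  rw [← Real.exp_add, ← Real.exp_add]
  apply Real.exp_lt_exp.mpr
  have ha : ((w + k*d)/Real.sqrt d)^2 = (w + k*d)^2 / d := by rw [div_pow, hs]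
  have hb : ((-w + k*d)/Real.sqrt d)^2 = (-w + k*d)^2 / d := by rw [div_pow, hs]
  rw [ha, hb]
  have h4 : (w + k*d)^2/d - (-w + k*d)^2/d = 4*k*w := by field_simp; ring
  linarith [h4]

lemma key_ineq (p k d : ℝ) (hp2 : 1/2 < p) (hp1 : p < 1) (hk : 0 < k) (hd : 0 < d)
    (w : ℝ) (hw : w < (Real.log p - Real.log (1-p)) / (2*k)) :
    (1-p) * Real.exp (-((-w + k*d)/Real.sqrt d)^2/2) < p * Real.exp (-((w + k*d)/Real.sqrt d)^2/2) := by
  apply key_gen p (1-p) k d (by linarith) (by linarith) hd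
  rw [lt_div_iff₀ (by positivity : (0:ℝ) < 2*k)] at hw
  linarith

lemma key_ineq2 (p k d : ℝ) (hp2 : 1/2 < p) (hp1 : p < 1) (hk : 0 < k) (hd : 0 < d)
    (w : ℝ) (hw : (Real.log p - Real.log (1-p)) / (2*k) < w) :
    p * Real.exp (-((w + k*d)/Real.sqrt d)^2/2) < (1-p) * Real.exp (-((-w + k*d)/Real.sqrt d)^2/2) := by
  have h := key_gen (1-p) p k d (by linarith) (by linarith) hd (-w) (by
    rw [div_lt_iff₀ (by positivity : (0:ℝ) < 2*k)] at hw
    linarith)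
  simpa using h

/-- The adversarial accuracy `v(w) = p·Φ((w+(η−ε)d)/√d) + (1−p)·Φ((−w+(η−ε)d)/√d)`
attains its unique global maximum at `w₁^AT = (ln p − ln(1−p))/(2(η−ε))`. -/
theorem adversarial_accuracy_max (p η d ε : ℝ) (hp : p ∈ Set.Ioo (1/2 : ℝ) 1)
    (hη : 0 < η) (hd : 0 < d) (hε : 0 < ε) (hεη : ε < η) :
    ∀ w : ℝ, w ≠ (Real.log p - Real.log (1 - p)) / (2 * (η - ε)) →
      p * stdNormalCDF ((w + (η - ε) * d) / Real.sqrt d) +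
        (1 - p) * stdNormalCDF ((-w + (η - ε) * d) / Real.sqrt d) <
      p * stdNormalCDF (((Real.log p - Real.log (1 - p)) / (2 * (η - ε)) + (η - ε) * d) /
          Real.sqrt d) +
        (1 - p) * stdNormalCDF ((-((Real.log p - Real.log (1 - p)) / (2 * (η - ε))) +
          (η - ε) * d) / Real.sqrt d) := by
  obtain ⟨hp2, hp1⟩ := hp
  set k := η - ε with hkdef
  have hk : 0 < k := by simp [hkdef]; linarith
  set s := Real.sqrt d with hsdef
  have hs : 0 < s := Real.sqrt_pos.mpr hd
  set wstar := (Real.log p - Real.log (1 - p)) / (2 * k) with hwstar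
  set v : ℝ → ℝ := fun w =>
    p * stdNormalCDF ((w + k * d) / s) + (1 - p) * stdNormalCDF ((-w + k * d) / s) with hv
  set g : ℝ → ℝ := fun t => (Real.sqrt (2*Real.pi))⁻¹ * Real.exp (-t^2/2) with hg
  have hderiv : ∀ w : ℝ, HasDerivAt v
      (p * (g ((w + k*d)/s) * (1/s)) + (1-p) * (g ((-w + k*d)/s) * (-1/s))) w := by
    intro w
    have h1 : HasDerivAt (fun w : ℝ => (w + k*d)/s) (1/s) w := by
      simpa using ((hasDerivAt_id w).add_const (k*d)).div_const s
    have h2 : HasDerivAt (fun w : ℝ => (-w + k*d)/s) (-1/s) w := by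
      simpa using (((hasDerivAt_id w).neg).add_const (k*d)).div_const s
    have c1 := ((hasDerivAt_stdNormalCDF ((w + k*d)/s)).comp w h1).const_mul p
    have c2 := ((hasDerivAt_stdNormalCDF ((-w + k*d)/s)).comp w h2).const_mul (1-p)
    exact c1.add c2
  have hcont : Continuous v := by
    have : Differentiable ℝ v := fun w => (hderiv w).differentiableAt
    exact this.continuous
  have hderiv_eq : ∀ w, deriv v w =
      p * (g ((w + k*d)/s) * (1/s)) + (1-p) * (g ((-w + k*d)/s) * (-1/s)) :=
    fun w => (hderiv w).deriv
  have hpos : ∀ w ∈ Set.Iio wstar, 0 < deriv v w := by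
    intro w hw
    rw [hderiv_eq]
    have hkey := key_ineq p k d hp2 hp1 hk hd w hw
    have hc : (0:ℝ) < (Real.sqrt (2*Real.pi))⁻¹ := by positivity
    have : (1-p) * g ((-w + k*d)/s) < p * g ((w + k*d)/s) := by
      simp only [hg]
      calc (1-p) * ((Real.sqrt (2*Real.pi))⁻¹ * Real.exp (-((-w + k*d)/s)^2/2))
          = (Real.sqrt (2*Real.pi))⁻¹ * ((1-p) * Real.exp (-((-w + k*d)/s)^2/2)) := by ring
        _ < (Real.sqrt (2*Real.pi))⁻¹ * (p * Real.exp (-((w + k*d)/s)^2/2)) := by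
            exact (mul_lt_mul_iff_right₀ hc).mpr hkey
        _ = p * ((Real.sqrt (2*Real.pi))⁻¹ * Real.exp (-((w + k*d)/s)^2/2)) := by ring
    have h' : p * (g ((w + k*d)/s) * (1/s)) + (1-p) * (g ((-w + k*d)/s) * (-1/s))
        = (p * g ((w + k*d)/s) - (1-p) * g ((-w + k*d)/s)) * (1/s) := by ring
    rw [h']
    have hsub : 0 < p * g ((w + k*d)/s) - (1-p) * g ((-w + k*d)/s) := by linarith
    positivity
  have hneg : ∀ w ∈ Set.Ioi wstar, deriv v w < 0 := by
    intro w hw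
    rw [hderiv_eq]
    have hkey := key_ineq2 p k d hp2 hp1 hk hd w hw
    have hc : (0:ℝ) < (Real.sqrt (2*Real.pi))⁻¹ := by positivity
    have hlt : p * g ((w + k*d)/s) < (1-p) * g ((-w + k*d)/s) := by
      simp only [hg]
      calc p * ((Real.sqrt (2*Real.pi))⁻¹ * Real.exp (-((w + k*d)/s)^2/2))
          = (Real.sqrt (2*Real.pi))⁻¹ * (p * Real.exp (-((w + k*d)/s)^2/2)) := by ring
        _ < (Real.sqrt (2*Real.pi))⁻¹ * ((1-p) * Real.exp (-((-w + k*d)/s)^2/2)) :=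
            (mul_lt_mul_iff_right₀ hc).mpr hkey
        _ = (1-p) * ((Real.sqrt (2*Real.pi))⁻¹ * Real.exp (-((-w + k*d)/s)^2/2)) := by ring
    have h' : p * (g ((w + k*d)/s) * (1/s)) + (1-p) * (g ((-w + k*d)/s) * (-1/s))
        = (p * g ((w + k*d)/s) - (1-p) * g ((-w + k*d)/s)) * (1/s) := by ring
    rw [h']
    have hsub : p * g ((w + k*d)/s) - (1-p) * g ((-w + k*d)/s) < 0 := by linarith
    exact mul_neg_of_neg_of_pos hsub (by positivity)
  have hmono : StrictMonoOn v (Set.Iic wstar) :=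
    strictMonoOn_of_deriv_pos (convex_Iic _) hcont.continuousOn
      (by rwa [interior_Iic])
  have hanti : StrictAntiOn v (Set.Ici wstar) :=
    strictAntiOn_of_deriv_neg (convex_Ici _) hcont.continuousOn
      (by rwa [interior_Ici])
  intro w hw
  show v w < v wstar
  rcases lt_or_gt_of_ne hw with h | h
  · exact hmono (Set.mem_Iic.mpr h.le) Set.self_mem_Iic h
  · exact hanti Set.self_mem_Ici (Set.mem_Ici.mpr h.le) h
end

section
/- Let u : ℝ → ℝ be continuous, strictly increasing on (−∞, w*] and strictly decreasing on [w*, ∞) for some w* ∈ ℝ, with u(w) → L± as w → ±∞ where L± < u(w*). Fix ε > 0 and define g(w) = min(u(w − ε), u(w + ε)). Then g attains its maximum at the unique point w_S characterized by u(w_S − ε) = u(w_S + ε), and moreover w_S − ε < w* < w_S + ε. -/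
/-- Abstract SAM optimum: if `u` is continuous, strictly increasing on `(−∞, w*]`,
strictly decreasing on `[w*, ∞)`, with limits `L₋, L₊ < u(w*)` at `∓∞`, and
`g(w) = min(u(w−ε), u(w+ε))` for `ε > 0`, then `g` attains its maximum at the unique
point `wS` characterized by `u(wS−ε) = u(wS+ε)`, and `wS − ε < w* < wS + ε`. -/
theorem sam_abstract_optimum (u : ℝ → ℝ) (wstar ε Lplus Lminus : ℝ)
    (hu : Continuous u)
    (hmono : StrictMonoOn u (Set.Iic wstar))
    (hanti : StrictAntiOn u (Set.Ici wstar))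
    (htop : Filter.Tendsto u Filter.atTop (nhds Lplus))
    (hbot : Filter.Tendsto u Filter.atBot (nhds Lminus))
    (hLp : Lplus < u wstar) (hLm : Lminus < u wstar) (hε : 0 < ε) :
    ∃ wS : ℝ, u (wS - ε) = u (wS + ε) ∧
      (∀ w' : ℝ, u (w' - ε) = u (w' + ε) → w' = wS) ∧
      (∀ w : ℝ, w ≠ wS → min (u (w - ε)) (u (w + ε)) < min (u (wS - ε)) (u (wS + ε))) ∧
      wS - ε < wstar ∧ wstar < wS + ε := by
  set h : ℝ → ℝ := fun w => u (w - ε) - u (w + ε) with hh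
  have hcont : Continuous h :=
    (hu.comp (continuous_id.sub continuous_const)).sub
      (hu.comp (continuous_id.add continuous_const))
  have hneg : h (wstar - ε) < 0 := by
    have h1 : u (wstar - ε - ε) < u wstar :=
      hmono (Set.mem_Iic.mpr (by linarith)) Set.self_mem_Iic (by linarith)
    have h2 : wstar - ε + ε = wstar := by ring
    simp only [hh, h2]
    linarith
  have hpos : 0 < h (wstar + ε) := by
    have h1 : u (wstar + ε + ε) < u wstar :=
      hanti Set.self_mem_Ici (Set.mem_Ici.mpr (by linarith)) (by linarith)
    have h2 : wstar + ε - ε = wstar := by ring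
    simp only [hh, h2]
    linarith
  -- strict monotonicity of h on the closed interval
  have hmonoI : ∀ a ∈ Set.Icc (wstar - ε) (wstar + ε),
      ∀ b ∈ Set.Icc (wstar - ε) (wstar + ε), a < b → h a < h b := by
    intro a ha b hb hab
    have h1 : u (a - ε) < u (b - ε) :=
      hmono (Set.mem_Iic.mpr (by linarith [hb.2])) (Set.mem_Iic.mpr (by linarith [hb.2]))
        (by linarith)
    have h2 : u (b + ε) < u (a + ε) :=
      hanti (Set.mem_Ici.mpr (by linarith [ha.1])) (Set.mem_Ici.mpr (by linarith [ha.1]))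
        (by linarith)
    simp only [hh]
    linarith
  -- IVT to find wS
  obtain ⟨wS, hwSmem, hwS0⟩ :
      ∃ wS ∈ Set.Ioo (wstar - ε) (wstar + ε), h wS = 0 := by
    have hsub : Set.Ioo (h (wstar - ε)) (h (wstar + ε)) ⊆
        h '' Set.Ioo (wstar - ε) (wstar + ε) :=
      intermediate_value_Ioo (by linarith) hcont.continuousOn
    obtain ⟨wS, hmem, heq⟩ := hsub ⟨hneg, hpos⟩
    exact ⟨wS, hmem, heq⟩
  have heq : u (wS - ε) = u (wS + ε) := by
    have := hwS0
    simp only [hh] at this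
    linarith
  -- any root lies in the closed interval
  have hroot_mem : ∀ w' : ℝ, u (w' - ε) = u (w' + ε) →
      w' ∈ Set.Icc (wstar - ε) (wstar + ε) := by
    intro w' hw'
    by_contra hcon
    simp only [Set.mem_Icc, not_and_or, not_le] at hcon
    rcases hcon with hlt | hgt
    · have : u (w' - ε) < u (w' + ε) :=
        hmono (Set.mem_Iic.mpr (by linarith)) (Set.mem_Iic.mpr (by linarith)) (by linarith)
      linarith
    · have : u (w' + ε) < u (w' - ε) :=
        hanti (Set.mem_Ici.mpr (by linarith)) (Set.mem_Ici.mpr (by linarith)) (by linarith)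
      linarith
  have hwSIcc : wS ∈ Set.Icc (wstar - ε) (wstar + ε) :=
    ⟨le_of_lt hwSmem.1, le_of_lt hwSmem.2⟩
  refine ⟨wS, heq, ?_, ?_, by linarith [hwSmem.1, hwSmem.2], by linarith [hwSmem.1, hwSmem.2]⟩
  · intro w' hw'
    have hw'mem := hroot_mem w' hw'
    have hw'0 : h w' = 0 := by simp only [hh]; linarith
    rcases lt_trichotomy w' wS with hlt | heqq | hgt
    · have := hmonoI w' hw'mem wS hwSIcc hlt
      linarith
    · exact heqq
    · have := hmonoI wS hwSIcc w' hw'mem hgt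
      linarith
  · intro w hw
    have hminS : min (u (wS - ε)) (u (wS + ε)) = u (wS - ε) := min_eq_left heq.le
    rcases lt_or_gt_of_ne hw with hlt | hgt
    · have h1 : u (w - ε) < u (wS - ε) :=
        hmono (Set.mem_Iic.mpr (by linarith [hwSmem.1, hwSmem.2])) (Set.mem_Iic.mpr (by linarith [hwSmem.1, hwSmem.2]))
          (by linarith)
      calc min (u (w - ε)) (u (w + ε)) ≤ u (w - ε) := min_le_left _ _
        _ < u (wS - ε) := h1
        _ = min (u (wS - ε)) (u (wS + ε)) := hminS.symm
    · have h1 : u (w + ε) < u (wS + ε) :=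
        hanti (Set.mem_Ici.mpr (by linarith [hwSmem.1, hwSmem.2])) (Set.mem_Ici.mpr (by linarith [hwSmem.1, hwSmem.2]))
          (by linarith)
      calc min (u (w - ε)) (u (w + ε)) ≤ u (w + ε) := min_le_right _ _
        _ < u (wS + ε) := h1
        _ = min (u (wS - ε)) (u (wS + ε)) := by rw [hminS, heq]
end

section
/- Let p ∈ (1/2, 1), η > 0, w* = (ln p − ln(1−p))/(2η) > 0, and φ(w) = exp(−w²)·(p·exp(−wη) − (1−p)·exp(wη)). Then for every h ∈ (0, w*]: ∫_{−h}^{0} φ(w* + w) dw > ∫_{0}^{h} (−φ(w* + w)) dw. Equivalently, ∫_{w*−h}^{w*} φ > −∫_{w*}^{w*+h} φ. -/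
/-!
Shifting to the zero `w*` of `φ`, the bracket factors as `-2√(p(1-p)) sinh(wη)`, so
`φ(w* + w) = -2√(p(1-p)) e^{-(w*+w)²} sinh(wη)` is odd up to the Gaussian weight. Reflecting the
left integral to `[0, h]`, the difference of the two sides becomes
`∫₀ʰ 2√(p(1-p)) sinh(wη) (e^{-(w*-w)²} - e^{-(w*+w)²}) dw`, whose integrand is positive because
`w* > 0` puts `w* - w` closer to the Gaussian's peak than `w* + w`.
-/

open Real Set intervalIntegral MeasureTheory

theorem integral_neg_lt_integral_of_reflect_sum_pos {f : ℝ → ℝ} (hf : Continuous f) {a h : ℝ}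
    (hh : 0 < h) (hsum : ∀ x ∈ Ioo 0 h, 0 < f (a - x) + f (a + x)) :
    ∫ w in (0 : ℝ)..h, -f (a + w) < ∫ w in -h..0, f (a + w) := by
  have hreflect : ∫ w in -h..0, f (a + w) = ∫ w in (0 : ℝ)..h, f (a - w) := by
    simpa [sub_eq_add_neg] using (integral_comp_neg (a := 0) (b := h) (fun w => f (a + w))).symm
  have hint_sub : IntervalIntegrable (fun w => f (a - w)) volume 0 h :=
    (hf.comp (by fun_prop)).intervalIntegrable 0 h
  have hint_add : IntervalIntegrable (fun w => f (a + w)) volume 0 h :=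
    (hf.comp (by fun_prop)).intervalIntegrable 0 h
  have hpos : 0 < ∫ w in (0 : ℝ)..h, (f (a - w) + f (a + w)) :=
    intervalIntegral_pos_of_pos_on (hint_sub.add hint_add) hsum hh
  rw [integral_add hint_sub hint_add] at hpos
  rw [hreflect, intervalIntegral.integral_neg]
  linarith

theorem mul_exp_neg_sub_mul_exp_eq_sinh {α β η : ℝ} (hα : 0 < α) (hβ : 0 < β) (hη : η ≠ 0)
    (x : ℝ) :
    α * exp (-((log α - log β) / (2 * η) + x) * η) - β * exp (((log α - log β) / (2 * η) + x) * η)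
      = -(2 * √(α * β) * sinh (x * η)) := by
  have hsqrt : √(α * β) = exp ((log α + log β) / 2) := by
    rw [sqrt_eq_iff_mul_self_eq_of_pos (exp_pos _), ← exp_add, add_halves, exp_add, exp_log hα,
      exp_log hβ]
  have hleft : α * exp (-((log α - log β) / (2 * η) + x) * η) = √(α * β) * exp (-(x * η)) := by
    rw [hsqrt, ← exp_add]
    nth_rewrite 1 [← exp_log hα]
    rw [← exp_add]
    congr 1
    field_simp
    ring
  have hright : β * exp (((log α - log β) / (2 * η) + x) * η) = √(α * β) * exp (x * η) := by
    rw [hsqrt, ← exp_add]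
    nth_rewrite 1 [← exp_log hβ]
    rw [← exp_add]
    congr 1
    field_simp
    ring
  rw [hleft, hright, sinh_eq]
  ring

theorem exp_neg_sq_add_lt_exp_neg_sq_sub {a x : ℝ} (ha : 0 < a) (hx : 0 < x) :
    exp (-(a + x) ^ 2) < exp (-(a - x) ^ 2) :=
  exp_lt_exp.mpr (by nlinarith)

/-- Integral inequality for `φ(w) = exp(−w²)·(p·e^{−wη} − (1−p)·e^{wη})` about its zero
`w* = (ln p − ln(1−p))/(2η) > 0`: for `0 < h ≤ w*`,
`∫_{−h}^{0} φ(w*+w) dw > ∫_{0}^{h} (−φ(w*+w)) dw`. -/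
theorem sam_integral_inequality (p η : ℝ) (hp : p ∈ Set.Ioo (1/2 : ℝ) 1) (hη : 0 < η) :
    ∀ h : ℝ, h ∈ Set.Ioc (0 : ℝ) ((Real.log p - Real.log (1 - p)) / (2 * η)) →
      (∫ w in (-h)..(0 : ℝ),
          Real.exp (-((Real.log p - Real.log (1 - p)) / (2 * η) + w) ^ 2) *
            (p * Real.exp (-((Real.log p - Real.log (1 - p)) / (2 * η) + w) * η) -
              (1 - p) * Real.exp (((Real.log p - Real.log (1 - p)) / (2 * η) + w) * η))) >
      (∫ w in (0 : ℝ)..h,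
          -(Real.exp (-((Real.log p - Real.log (1 - p)) / (2 * η) + w) ^ 2) *
            (p * Real.exp (-((Real.log p - Real.log (1 - p)) / (2 * η) + w) * η) -
              (1 - p) * Real.exp (((Real.log p - Real.log (1 - p)) / (2 * η) + w) * η)))) := by
  obtain ⟨hp_half, hp_one⟩ := hp
  rintro h ⟨hh, -⟩
  have hp0 : 0 < p := by linarith
  have hq0 : 0 < 1 - p := by linarith
  have hW : 0 < (log p - log (1 - p)) / (2 * η) :=
    div_pos (sub_pos.mpr (log_lt_log hq0 (by linarith))) (by positivity)
  refine integral_neg_lt_integral_of_reflect_sum_pos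
    (f := fun w => exp (-w ^ 2) * (p * exp (-w * η) - (1 - p) * exp (w * η)))
    (by fun_prop) hh fun x ⟨hx, _⟩ => ?_
  have hsinh : 0 < sinh (x * η) := sinh_pos_iff.mpr (mul_pos hx hη)
  have hgauss := exp_neg_sq_add_lt_exp_neg_sq_sub hW hx
  have hleft := mul_exp_neg_sub_mul_exp_eq_sinh hp0 hq0 hη.ne' (-x)
  rw [← sub_eq_add_neg, neg_mul x η, sinh_neg] at hleft
  simp only [hleft, mul_exp_neg_sub_mul_exp_eq_sinh hp0 hq0 hη.ne' x]
  have := mul_pos (mul_pos (sqrt_pos.mpr (mul_pos hp0 hq0)) hsinh) (sub_pos.mpr hgauss)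
  linarith
end

section
/- Let η, ε_AT, ε_SAM > 0 with ε_AT < η, and let w* > 0. If (η/(η − ε_AT))·w* = (1 + (2/3)·ε_SAM²)·w*, then 2 + 3/ε_SAM² = 2η/ε_AT, and moreover if additionally ε_SAM ≤ 1 and η ≤ 1 then ε_SAM > ε_AT. -/
/-- Theorem 5 of the paper: if AT with budget `ε_AT` and SAM with budget `ε_SAM` yield the
same robust-feature weight, i.e. `(η/(η−ε_AT))·w* = (1 + (2/3)·ε_SAM²)·w*` with `w* > 0`,
then `2 + 3/ε_SAM² = 2η/ε_AT`; moreover if `ε_SAM ≤ 1` and `η ≤ 1` then `ε_SAM > ε_AT`. -/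
theorem sam_at_budget_relation (η εAT εSAM wstar : ℝ)
    (hη : 0 < η) (hAT : 0 < εAT) (hSAM : 0 < εSAM) (hATη : εAT < η) (hw : 0 < wstar)
    (heq : (η / (η - εAT)) * wstar = (1 + (2/3 : ℝ) * εSAM ^ 2) * wstar) :
    2 + 3 / εSAM ^ 2 = 2 * η / εAT ∧ (εSAM ≤ 1 → η ≤ 1 → εAT < εSAM) := by
  have hd : 0 < η - εAT := by linarith
  have h1 : η / (η - εAT) = 1 + (2/3 : ℝ) * εSAM ^ 2 := mul_right_cancel₀ hw.ne' heq
  have h2 : η = (1 + (2/3 : ℝ) * εSAM ^ 2) * (η - εAT) := (div_eq_iff hd.ne').mp h1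
  have hkey : εAT * (3 + 2 * εSAM ^ 2) = 2 * εSAM ^ 2 * η := by nlinarith [h2]
  constructor
  · field_simp
    nlinarith [hkey]
  · intro h1s h1η
    nlinarith [hkey, sq_nonneg (εSAM - 1), mul_pos hSAM hSAM, sq_nonneg εSAM,
      mul_le_one₀ h1s hη.le h1η]
end

section
/- Let p ∈ (1/2, 1), 0 < ε < η, and define w*(η) = (ln p − ln(1−p))/(2η). Let u_η(w) = p·Φ((w+ηd)/√d) + (1−p)·Φ((−w+ηd)/√d) for fixed d > 0. Then max_w u_{η−ε}(w) = u_{η−ε}(w*(η−ε)) < u_η(w*(η)) = max_w u_η(w). That is, the optimal adversarial accuracy under perturbation budget ε is strictly smaller than the optimal clean accuracy. -/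
open MeasureTheory ProbabilityTheory Real Set

/-! With `s = √d`, the two Gaussian terms of `u_a` have arguments `A = (w + a d)/s` and
`B = (-w + a d)/s`, and `A² - B² = 4 a w`, so the likelihood ratio `φ(A)/φ(B) = exp(-2 a w)`.
Hence `u_a'(w) = φ(B)/s · (p e^{-2aw} - (1 - p))`, which changes sign exactly once, from `+` to
`-`, at `w*(a)`: `w*(a)` is the global maximiser of `u_a`. For a fixed `w`, both arguments grow
with `a`, so `u_a(w)` is strictly increasing in `a`; therefore
`u_{η-ε}(w*(η-ε)) < u_η(w*(η-ε)) ≤ u_η(w*(η))`. -/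

theorem hasDerivAt_integral_Iic {f : ℝ → ℝ} (hf : Integrable f) (hc : Continuous f) (x : ℝ) :
    HasDerivAt (fun y => ∫ t in Iic y, f t) (f x) x := by
  have hsplit : (fun y => ∫ t in Iic y, f t) = fun y => (∫ t in Iic 0, f t) + ∫ t in 0..y, f t := by
    funext y
    rw [← intervalIntegral.integral_Iic_sub_Iic hf.integrableOn hf.integrableOn]
    ring
  rw [hsplit]
  exact (intervalIntegral.integral_hasDerivAt_right hf.intervalIntegrable
    hc.aestronglyMeasurable.stronglyMeasurableAtFilter hc.continuousAt).const_add _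

theorem apply_le_apply_of_hasDerivAt_nonneg_of_nonpos {f f' : ℝ → ℝ} {c : ℝ}
    (hf : ∀ x, HasDerivAt f (f' x) x) (hleft : ∀ x ≤ c, 0 ≤ f' x)
    (hright : ∀ x, c ≤ x → f' x ≤ 0) (x : ℝ) : f x ≤ f c := by
  have hcont : Continuous f := continuous_iff_continuousAt.2 fun x => (hf x).continuousAt
  rcases le_total x c with hxc | hcx
  · exact monotoneOn_of_hasDerivWithinAt_nonneg (convex_Iic c) hcont.continuousOn
      (fun y _ => (hf y).hasDerivWithinAt) (fun y hy => hleft y (interior_subset hy).out)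
      hxc (mem_Iic.2 le_rfl) hxc
  · exact antitoneOn_of_hasDerivWithinAt_nonpos (convex_Ici c) hcont.continuousOn
      (fun y _ => (hf y).hasDerivWithinAt) (fun y hy => hright y (interior_subset hy).out)
      (mem_Ici.2 le_rfl) hcx hcx

theorem gaussianPDFReal_eq_mul_exp (μ : ℝ) (v : NNReal) (t u : ℝ) :
    gaussianPDFReal μ v t =
      gaussianPDFReal μ v u * exp (((u - μ) ^ 2 - (t - μ) ^ 2) / (2 * v)) := by
  rw [gaussianPDFReal, gaussianPDFReal, mul_assoc _ (rexp _), ← exp_add]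
  ring_nf

theorem stdNormalCDF_eq_integral_gaussianPDFReal (x : ℝ) :
    stdNormalCDF x = ∫ t in Iic x, gaussianPDFReal 0 1 t := by
  simp [stdNormalCDF, gaussianPDFReal]

theorem hasDerivAt_stdNormalCDF_s14 (x : ℝ) :
    HasDerivAt stdNormalCDF (gaussianPDFReal 0 1 x) x := by
  simp_rw [funext stdNormalCDF_eq_integral_gaussianPDFReal]
  exact hasDerivAt_integral_Iic (integrable_gaussianPDFReal 0 1)
    (by unfold gaussianPDFReal; fun_prop) x

theorem stdNormalCDF_strictMono : StrictMono stdNormalCDF :=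
  strictMono_of_hasDerivAt_pos hasDerivAt_stdNormalCDF_s14
    fun x => gaussianPDFReal_pos 0 1 x one_ne_zero

noncomputable def accuracy (p a d w : ℝ) : ℝ :=
  p * stdNormalCDF ((w + a * d) / √d) + (1 - p) * stdNormalCDF ((-w + a * d) / √d)

noncomputable def optimalWeight (p a : ℝ) : ℝ := (log p - log (1 - p)) / (2 * a)

section Accuracy

variable {p a d : ℝ}

theorem hasDerivAt_accuracy (hd : 0 < d) (w : ℝ) :
    HasDerivAt (accuracy p a d)
      (gaussianPDFReal 0 1 ((-w + a * d) / √d) / √d * (p * exp (-2 * a * w) - (1 - p))) w := by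
  have hA := (hasDerivAt_stdNormalCDF_s14 ((w + a * d) / √d)).comp w
    (((hasDerivAt_id w).add_const (a * d)).div_const √d)
  have hB := (hasDerivAt_stdNormalCDF_s14 ((-w + a * d) / √d)).comp w
    (((hasDerivAt_id w).neg.add_const (a * d)).div_const √d)
  have hratio : gaussianPDFReal 0 1 ((w + a * d) / √d) =
      gaussianPDFReal 0 1 ((-w + a * d) / √d) * exp (-2 * a * w) := by
    have hs : √d ≠ 0 := (sqrt_pos.2 hd).ne'
    rw [gaussianPDFReal_eq_mul_exp 0 1 _ ((-w + a * d) / √d), NNReal.coe_one]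
    congr 2
    field_simp
    rw [sq_sqrt hd.le]
    ring
  refine ((hA.const_mul p).add (hB.const_mul (1 - p))).congr_deriv ?_
  rw [hratio]
  ring

theorem mul_exp_optimalWeight (hp : p ∈ Ioo 0 1) (ha : a ≠ 0) :
    p * exp (-2 * a * optimalWeight p a) = 1 - p := by
  have hq : 0 < 1 - p := sub_pos.2 hp.2
  rw [optimalWeight, show -2 * a * ((log p - log (1 - p)) / (2 * a)) = log (1 - p) - log p by
    field_simp; ring, exp_sub, exp_log hp.1, exp_log hq]
  field_simp [hp.1.ne']

theorem accuracy_le_accuracy_optimalWeight (hp : p ∈ Ioo 0 1) (ha : 0 < a) (hd : 0 < d)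
    (w : ℝ) : accuracy p a d w ≤ accuracy p a d (optimalWeight p a) := by
  refine apply_le_apply_of_hasDerivAt_nonneg_of_nonpos (hasDerivAt_accuracy hd) ?_ ?_ w
  all_goals
    intro x hx
    have hfactor : 0 ≤ gaussianPDFReal 0 1 ((-x + a * d) / √d) / √d :=
      div_nonneg (gaussianPDFReal_nonneg 0 1 _) (sqrt_nonneg d)
    rw [← mul_exp_optimalWeight hp ha.ne']
  · exact mul_nonneg hfactor (sub_nonneg.2 (mul_le_mul_of_nonneg_left
      (exp_le_exp.2 (by nlinarith)) hp.1.le))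
  · exact mul_nonpos_of_nonneg_of_nonpos hfactor (sub_nonpos.2 (mul_le_mul_of_nonneg_left
      (exp_le_exp.2 (by nlinarith)) hp.1.le))

theorem accuracy_lt_accuracy_of_lt (hp : p ∈ Ioo 0 1) (hd : 0 < d) {b : ℝ} (hab : a < b)
    (w : ℝ) : accuracy p a d w < accuracy p b d w := by
  have hq : 0 < 1 - p := sub_pos.2 hp.2
  have hs : 0 < √d := sqrt_pos.2 hd
  have hshift : ∀ c, stdNormalCDF ((c + a * d) / √d) < stdNormalCDF ((c + b * d) / √d) :=
    fun c => stdNormalCDF_strictMono (div_lt_div_of_pos_right (by nlinarith) hs)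
  unfold accuracy
  linarith [mul_lt_mul_of_pos_left (hshift w) hp.1, mul_lt_mul_of_pos_left (hshift (-w)) hq]

end Accuracy

/-- Robustness–accuracy trade-off: with `u_a(w) = p·Φ((w+ad)/√d) + (1−p)·Φ((−w+ad)/√d)`
and `w*(a) = (ln p − ln(1−p))/(2a)`, for `0 < ε < η` the optimal adversarial accuracy is
strictly smaller than the optimal clean accuracy:
`max_w u_{η−ε}(w) = u_{η−ε}(w*(η−ε)) < u_η(w*(η)) = max_w u_η(w)`. -/
theorem adversarial_vs_clean_optimal_accuracy (p η d ε : ℝ)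
    (hp : p ∈ Set.Ioo (1/2 : ℝ) 1) (hd : 0 < d) (hε : 0 < ε) (hεη : ε < η) :
    (∀ w : ℝ,
      p * stdNormalCDF ((w + (η - ε) * d) / Real.sqrt d) +
        (1 - p) * stdNormalCDF ((-w + (η - ε) * d) / Real.sqrt d) ≤
      p * stdNormalCDF (((Real.log p - Real.log (1 - p)) / (2 * (η - ε)) + (η - ε) * d) /
          Real.sqrt d) +
        (1 - p) * stdNormalCDF ((-((Real.log p - Real.log (1 - p)) / (2 * (η - ε))) +
          (η - ε) * d) / Real.sqrt d)) ∧
    (∀ w : ℝ,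
      p * stdNormalCDF ((w + η * d) / Real.sqrt d) +
        (1 - p) * stdNormalCDF ((-w + η * d) / Real.sqrt d) ≤
      p * stdNormalCDF (((Real.log p - Real.log (1 - p)) / (2 * η) + η * d) / Real.sqrt d) +
        (1 - p) * stdNormalCDF ((-((Real.log p - Real.log (1 - p)) / (2 * η)) + η * d) /
          Real.sqrt d)) ∧
    (p * stdNormalCDF (((Real.log p - Real.log (1 - p)) / (2 * (η - ε)) + (η - ε) * d) /
          Real.sqrt d) +
        (1 - p) * stdNormalCDF ((-((Real.log p - Real.log (1 - p)) / (2 * (η - ε))) +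
          (η - ε) * d) / Real.sqrt d) <
      p * stdNormalCDF (((Real.log p - Real.log (1 - p)) / (2 * η) + η * d) / Real.sqrt d) +
        (1 - p) * stdNormalCDF ((-((Real.log p - Real.log (1 - p)) / (2 * η)) + η * d) /
          Real.sqrt d)) := by
  have hp' : p ∈ Ioo 0 1 := Ioo_subset_Ioo_left (by norm_num) hp
  have hηε : 0 < η - ε := sub_pos.2 hεη
  have hη : 0 < η := hε.trans hεη
  exact ⟨accuracy_le_accuracy_optimalWeight hp' hηε hd,
    accuracy_le_accuracy_optimalWeight hp' hη hd,
    (accuracy_lt_accuracy_of_lt hp' hd (sub_lt_self η hε) _).trans_le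
      (accuracy_le_accuracy_optimalWeight hp' hη hd _)⟩
end
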